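/- Let 𝔇_n^+ = {π ∈ 𝔇_n : π_n > 0}, 𝔇_n^− = {π ∈ 𝔇_n : π_n < 0}, and D_n^±(s,t,q) = Σ_{π∈𝔇_n^±} s^{edes_D(π)} t^{odes_D(π)} q^{inv_D(π)}. If n = 2k+1 (k ≥ 1) then Σ_{π∈𝔇_n^−} s^{edes_D(π)} t^{odes_D(π)} q^{inv_D(π)} = Σ_{π∈𝔇_n^+} s^{k−edes_D(π)} t^{k+1−odes_D(π)} q^{n(n−1)−inv_D(π)}, i.e. D_n^−(s,t,q) = q^{n(n−1)} s^k t^{k+1} · D_n^+(s^{−1},t^{−1},q^{−1}). If n = 2k (k ≥ 1) then Σ_{π∈𝔇_n^−} s^{edes_D(π)} t^{odes_D(π)} q^{inv_D(π)} = Σ_{π∈𝔇_n^+} s^{k−1−edes_D(π)} t^{k+1−odes_D(π)} q^{n(n−1)−inv_D(π)}, i.e. D_n^−(s,t,q) = q^{n(n−1)} s^{k−1} t^{k+1} · D_n^+(s^{−1},t^{−1},q^{−1}). Consequently D_n(s,t,q) = D_n^+(s,t,q) + q^{n(n−1)} s^k t^{k+1} D_n^+(s^{−1},t^{−1},q^{−1})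 for n = 2k+1, and D_n(s,t,q) = D_n^+(s,t,q) + q^{n(n−1)} s^{k−1} t^{k+1} D_n^+(s^{−1},t^{−1},q^{−1}) for n = 2k. -/
import Mathlib


open Finset

/-- The hyperoctahedral group `𝔅_n`, encoded as (permutation of positions, signs):
the signed permutation sends `i+1` to `±(σ i + 1)`. -/
abbrev BG (n : ℕ) := Equiv.Perm (Fin n) × (Fin n → Bool)

/-- The value `π_i` (for `1 ≤ i ≤ n`) of the signed permutation, with `π_0 = 0`. -/
def bval {n : ℕ} (w : BG n) (i : ℕ) : ℤ :=
  if h : 1 ≤ i ∧ i ≤ n then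
    (if w.2 ⟨i - 1, by omega⟩ then -1 else 1) * (((w.1 ⟨i - 1, by omega⟩ : Fin n) : ℕ) + 1 : ℤ)
  else 0

/-- `edes_B`: even `i ∈ {0,…,n−1}` with `π_i > π_{i+1}`. -/
def edesB {n : ℕ} (w : BG n) : ℕ :=
  ((range n).filter fun i => Even i ∧ bval w (i + 1) < bval w i).card

/-- `odes_B`: odd `i ∈ {0,…,n−1}` with `π_i > π_{i+1}`. -/
def odesB {n : ℕ} (w : BG n) : ℕ :=
  ((range n).filter fun i => Odd i ∧ bval w (i + 1) < bval w i).card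

/-- `easc_B`: even `i ∈ {0,…,n−1}` with `π_i < π_{i+1}`. -/
def eascB {n : ℕ} (w : BG n) : ℕ :=
  ((range n).filter fun i => Even i ∧ bval w i < bval w (i + 1)).card

/-- `oasc_B`: odd `i ∈ {0,…,n−1}` with `π_i < π_{i+1}`. -/
def oascB {n : ℕ} (w : BG n) : ℕ :=
  ((range n).filter fun i => Odd i ∧ bval w i < bval w (i + 1)).card

/-- type B inversion number -/
def invB {n : ℕ} (w : BG n) : ℕ :=
  ((Icc 1 n ×ˢ Icc 1 n).filter fun p => p.1 < p.2 ∧ bval w p.2 < bval w p.1).card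
  + ((Icc 1 n ×ˢ Icc 1 n).filter fun p => p.1 < p.2 ∧ bval w p.2 < -bval w p.1).card
  + ((Icc 1 n).filter fun i => bval w i < 0).card

/-- `B_n(s,t,q)` -/
noncomputable def Bpoly {A : Type*} [CommRing A] (n : ℕ) (s t q : A) : A :=
  ∑ w : BG n, s ^ edesB w * t ^ odesB w * q ^ invB w

/-- `B_n(1,q)` -/
noncomputable def BOne {A : Type*} [CommRing A] (n : ℕ) (q : A) : A :=
  ∑ w : BG n, q ^ invB w

/-- `[k]_q` -/
def qInt {A : Type*} [CommRing A] (k : ℕ) (q : A) : A := ∑ i ∈ range k, q ^ i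

/-- `[k]_q!` -/
def qFact {A : Type*} [CommRing A] (k : ℕ) (q : A) : A := ∏ i ∈ range k, qInt (i + 1) q

/-- number of negative values `π_1,…,π_n` -/
def negs {n : ℕ} (w : BG n) : ℕ := ((Icc 1 n).filter fun i => bval w i < 0).card

/-- the type D group `𝔇_n` inside `𝔅_n` -/
def DG (n : ℕ) : Finset (BG n) := univ.filter fun w => Even (negs w)

/-- `odes_D`: odd `i ∈ {−1,1,…,n−1}` with `π_i > π_{|i|+1}` (the index `i = −1`
contributes iff `−π_1 > π_2`). -/
def odesD {n : ℕ} (w : BG n) : ℕ :=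
  ((Icc 1 (n - 1)).filter fun i => Odd i ∧ bval w (i + 1) < bval w i).card
  + (if bval w 2 < -bval w 1 then 1 else 0)

/-- `edes_D`: even `i ∈ {−1,1,…,n−1}` with `π_i > π_{i+1}`. -/
def edesD {n : ℕ} (w : BG n) : ℕ :=
  ((Icc 1 (n - 1)).filter fun i => Even i ∧ bval w (i + 1) < bval w i).card

/-- type D inversion number -/
def invD {n : ℕ} (w : BG n) : ℕ :=
  ((Icc 1 n ×ˢ Icc 1 n).filter fun p => p.1 < p.2 ∧ bval w p.2 < bval w p.1).card
  + ((Icc 1 n ×ˢ Icc 1 n).filter fun p => p.1 < p.2 ∧ bval w p.2 < -bval w p.1).card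

/-- `D_n(s,t,q)` -/
noncomputable def Dpoly {A : Type*} [CommRing A] (n : ℕ) (s t q : A) : A :=
  ∑ w ∈ DG n, s ^ edesD w * t ^ odesD w * q ^ invD w

/-- `D_n(1,q)` -/
noncomputable def DOne {A : Type*} [CommRing A] (n : ℕ) (q : A) : A :=
  ∑ w ∈ DG n, q ^ invD w

noncomputable section

/-- the field `ℚ(q,s,t)` -/
abbrev K : Type := FractionRing (MvPolynomial (Fin 3) ℚ)

def qK : K := algebraMap (MvPolynomial (Fin 3) ℚ) K (MvPolynomial.X 0)
def sK : K := algebraMap (MvPolynomial (Fin 3) ℚ) K (MvPolynomial.X 1)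
def tK : K := algebraMap (MvPolynomial (Fin 3) ℚ) K (MvPolynomial.X 2)

/-- the ring `R = ℚ(q,s,t)[M]/(M² − (1−s)(1−t))` -/
abbrev R : Type := AdjoinRoot ((Polynomial.X : Polynomial K) ^ 2
  - Polynomial.C ((1 - sK) * (1 - tK)))

/-- the square root `M` of `(1−s)(1−t)` -/
def M : R := AdjoinRoot.root _

def ofK : K →+* R := algebraMap K R

/-- `𝔇_n^+` -/
def Dplus (n : ℕ) : Finset (BG n) := (DG n).filter fun w => 0 < bval w n

/-- `𝔇_n^−` -/
def Dminus (n : ℕ) : Finset (BG n) := (DG n).filter fun w => bval w n < 0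

/-- `D_n^+(s,t,q)` -/
def DplusPoly (n : ℕ) (s t q : K) : K :=
  ∑ w ∈ Dplus n, s ^ edesD w * t ^ odesD w * q ^ invD w

/-- `D_n^−(s,t,q)` -/
def DminusPoly (n : ℕ) (s t q : K) : K :=
  ∑ w ∈ Dminus n, s ^ edesD w * t ^ odesD w * q ^ invD w

section Lemmas
variable {n : ℕ}

def negBG (w : BG n) : BG n := (w.1, fun i => !w.2 i)

def flip1 (w : BG n) : BG n := (w.1, fun i => if (i : ℕ) = 0 then !w.2 i else w.2 i)

lemma bval_negBG (w : BG n) (i : ℕ) : bval (negBG w) i = -bval w i := by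
  simp only [bval, negBG]
  split_ifs <;> simp_all <;> ring

lemma bval_flip1_one (w : BG n) (hn : 1 ≤ n) : bval (flip1 w) 1 = -bval w 1 := by
  simp only [bval, flip1]
  have h : 1 ≤ 1 ∧ 1 ≤ n := ⟨le_refl 1, hn⟩
  rw [dif_pos h, dif_pos h]
  split_ifs <;> simp_all <;> ring

lemma bval_flip1_ne (w : BG n) {i : ℕ} (hi : i ≠ 1) : bval (flip1 w) i = bval w i := by
  simp only [bval, flip1]
  split_ifs <;> simp_all <;> omega

lemma bval_pos_or_neg (w : BG n) {i : ℕ} (h1 : 1 ≤ i) (h2 : i ≤ n) :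
    1 ≤ bval w i ∨ bval w i ≤ -1 := by
  simp only [bval]
  rw [dif_pos ⟨h1, h2⟩]
  split_ifs <;> [right; left] <;> omega

lemma bval_natAbs (w : BG n) {i : ℕ} (h1 : 1 ≤ i) (h2 : i ≤ n) :
    (bval w i).natAbs = ((w.1 ⟨i - 1, by omega⟩ : Fin n) : ℕ) + 1 := by
  simp only [bval]
  rw [dif_pos ⟨h1, h2⟩]
  split_ifs <;> omega

lemma bval_natAbs_ne (w : BG n) {i j : ℕ} (h1 : 1 ≤ i) (h2 : i ≤ n) (h3 : 1 ≤ j)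
    (h4 : j ≤ n) (hij : i ≠ j) : (bval w i).natAbs ≠ (bval w j).natAbs := by
  rw [bval_natAbs w h1 h2, bval_natAbs w h3 h4]
  intro hc
  have heq : (⟨i - 1, by omega⟩ : Fin n) = ⟨j - 1, by omega⟩ := by
    apply w.1.injective
    exact Fin.ext (by omega)
  have h5 : i - 1 = j - 1 := congrArg Fin.val heq
  omega

end Lemmas
section Lemmas2
variable {n : ℕ}

lemma insert_Icc_one (m : ℕ) : Icc 1 (m+1) = insert (m+1) (Icc 1 m) := by
  ext x; simp only [Finset.mem_Icc, Finset.mem_insert]; omega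

lemma count_pairs (n : ℕ) :
    ∑ p ∈ Icc 1 n ×ˢ Icc 1 n, (if p.1 < p.2 then 2 else 0) = n * (n - 1) := by
  rw [Finset.sum_product]
  have h1 : ∀ i ∈ Icc 1 n, ∑ j ∈ Icc 1 n, (if i < j then 2 else 0) = 2 * (n - i) := by
    intro i hi
    rw [← Finset.sum_filter]
    have : (Icc 1 n).filter (fun j => i < j) = Icc (i+1) n := by
      ext j; simp only [Finset.mem_filter, Finset.mem_Icc]; omega
    rw [this]
    rw [Finset.sum_const, Nat.card_Icc, smul_eq_mul]
    simp only [Finset.mem_Icc] at hi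
    omega
  rw [Finset.sum_congr rfl h1]
  have h2 : ∑ i ∈ Icc 1 n, 2 * (n - i) = 2 * ∑ i ∈ Icc 1 n, (n - i) := by
    rw [Finset.mul_sum]
  rw [h2]
  have h3 : ∑ i ∈ Icc 1 n, (n - i) = ∑ i ∈ range n, i := by
    apply Finset.sum_nbij' (fun x => n - x) (fun y => n - y)
    · intro a ha; simp only [Finset.mem_Icc] at ha; simp only [Finset.mem_range]; omega
    · intro a ha; simp only [Finset.mem_range] at ha; simp only [Finset.mem_Icc]; omega
    · intro a ha; simp only [Finset.mem_Icc] at ha; omega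
    · intro a ha; simp only [Finset.mem_range] at ha; omega
    · intro a _; rfl
  rw [h3, mul_comm, Finset.sum_range_id_mul_two]

lemma card_even_Icc (m : ℕ) : ((Icc 1 m).filter (fun i => Even i)).card = m / 2 := by
  induction m with
  | zero => simp
  | succ m ih =>
    rw [insert_Icc_one, Finset.filter_insert]
    by_cases he : Even (m + 1)
    · rw [if_pos he, Finset.card_insert_of_notMem (by simp)]
      rw [Nat.even_iff] at he; omega
    · rw [if_neg he]
      rw [Nat.even_iff] at he; omega

lemma card_odd_Icc (m : ℕ) : ((Icc 1 m).filter (fun i => Odd i)).card = (m + 1) / 2 := by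
  induction m with
  | zero => simp
  | succ m ih =>
    rw [insert_Icc_one, Finset.filter_insert]
    by_cases he : Odd (m + 1)
    · rw [if_pos he, Finset.card_insert_of_notMem (by simp)]
      rw [Nat.odd_iff] at he; omega
    · rw [if_neg he]
      rw [Nat.odd_iff] at he; omega

end Lemmas2
section Lemmas3
variable {n : ℕ}

lemma invD_negBG (w : BG n) : invD w + invD (negBG w) = n * (n - 1) := by
  unfold invD
  rw [Finset.card_filter, Finset.card_filter, Finset.card_filter, Finset.card_filter,
    ← Finset.sum_add_distrib, ← Finset.sum_add_distrib, ← Finset.sum_add_distrib]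
  rw [← count_pairs n]
  apply Finset.sum_congr rfl
  intro p hp
  simp only [Finset.mem_product, Finset.mem_Icc] at hp
  simp only [bval_negBG]
  by_cases hij : p.1 < p.2
  · have hne := bval_natAbs_ne w hp.1.1 hp.1.2 hp.2.1 hp.2.2 (by omega)
    split_ifs <;> omega
  · split_ifs <;> omega

lemma edesD_negBG (w : BG n) : edesD w + edesD (negBG w) = ((Icc 1 (n-1)).filter (fun i => Even i)).card := by
  unfold edesD
  rw [Finset.card_filter, Finset.card_filter, Finset.card_filter, ← Finset.sum_add_distrib]
  apply Finset.sum_congr rfl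
  intro i hi
  simp only [Finset.mem_Icc] at hi
  simp only [bval_negBG]
  have hne := bval_natAbs_ne w (show 1 ≤ i by omega) (show i ≤ n by omega)
    (show 1 ≤ i + 1 by omega) (show i + 1 ≤ n by omega) (by omega)
  by_cases he : Even i
  · simp only [he, true_and, if_pos]
    split_ifs <;> omega
  · simp [he]

lemma odesD_negBG (hn : 2 ≤ n) (w : BG n) :
    odesD w + odesD (negBG w) = ((Icc 1 (n-1)).filter (fun i => Odd i)).card + 1 := by
  unfold odesD
  rw [Finset.card_filter, Finset.card_filter, Finset.card_filter]
  have hsum : ∑ i ∈ Icc 1 (n-1), (if Odd i ∧ bval w (i+1) < bval w i then 1 else 0)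
      + ∑ i ∈ Icc 1 (n-1), (if Odd i ∧ bval (negBG w) (i+1) < bval (negBG w) i then 1 else 0)
      = ∑ i ∈ Icc 1 (n-1), (if Odd i then 1 else 0) := by
    rw [← Finset.sum_add_distrib]
    apply Finset.sum_congr rfl
    intro i hi
    simp only [Finset.mem_Icc] at hi
    simp only [bval_negBG]
    have hne := bval_natAbs_ne w (show 1 ≤ i by omega) (show i ≤ n by omega)
      (show 1 ≤ i + 1 by omega) (show i + 1 ≤ n by omega) (by omega)
    by_cases ho : Odd i
    · simp only [ho, true_and, if_pos]
      split_ifs <;> omega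
    · simp [ho]
  have hext : (if bval w 2 < -bval w 1 then 1 else 0)
      + (if bval (negBG w) 2 < -bval (negBG w) 1 then 1 else 0) = 1 := by
    simp only [bval_negBG]
    have hne := bval_natAbs_ne w (show 1 ≤ 1 by omega) (show 1 ≤ n by omega)
      (show 1 ≤ 2 by omega) (show 2 ≤ n by omega) (by omega)
    split_ifs <;> omega
  omega

lemma negs_negBG (w : BG n) : negs w + negs (negBG w) = n := by
  unfold negs
  rw [Finset.card_filter, Finset.card_filter, ← Finset.sum_add_distrib]
  have h1 : ∀ i ∈ Icc 1 n, (if bval w i < 0 then 1 else 0)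
      + (if bval (negBG w) i < 0 then 1 else 0) = 1 := by
    intro i hi
    simp only [Finset.mem_Icc] at hi
    simp only [bval_negBG]
    have := bval_pos_or_neg w hi.1 hi.2
    split_ifs <;> omega
  rw [Finset.sum_congr rfl h1, Finset.sum_const, smul_eq_mul, mul_one, Nat.card_Icc]
  omega

end Lemmas3
section Lemmas4
variable {n : ℕ}

lemma invD_flip1 (hn : 1 ≤ n) (w : BG n) : invD (flip1 w) = invD w := by
  unfold invD
  rw [Finset.card_filter, Finset.card_filter, Finset.card_filter, Finset.card_filter,
    ← Finset.sum_add_distrib, ← Finset.sum_add_distrib]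
  apply Finset.sum_congr rfl
  intro p hp
  simp only [Finset.mem_product, Finset.mem_Icc] at hp
  by_cases hij : p.1 < p.2
  · have h2 : bval (flip1 w) p.2 = bval w p.2 := bval_flip1_ne w (by omega)
    by_cases h1 : p.1 = 1
    · rw [h1] at *
      rw [bval_flip1_one w hn, h2]
      simp only [neg_neg]
      split_ifs <;> omega
    · rw [bval_flip1_ne w h1, h2]
  · split_ifs <;> omega

lemma edesD_flip1 (w : BG n) : edesD (flip1 w) = edesD w := by
  unfold edesD
  congr 1
  apply Finset.filter_congr
  intro i hi
  simp only [Finset.mem_Icc] at hi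
  by_cases he : Even i
  · have h1 : i ≠ 1 := by rintro rfl; exact (Nat.not_even_one) he
    rw [bval_flip1_ne w h1, bval_flip1_ne w (show i + 1 ≠ 1 by omega)]
  · simp [he]

lemma odesD_flip1 (hn : 2 ≤ n) (w : BG n) : odesD (flip1 w) = odesD w := by
  have h1 : (1:ℕ) ∈ Icc 1 (n-1) := by simp only [Finset.mem_Icc]; omega
  have key : ∀ u : BG n, odesD u = ∑ i ∈ Icc 1 (n-1),
      ((if Odd i ∧ bval u (i+1) < bval u i then 1 else 0)
        + (if i = 1 then (if bval u 2 < -bval u 1 then 1 else 0) else 0)) := by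
    intro u
    unfold odesD
    rw [Finset.card_filter, Finset.sum_add_distrib, Finset.sum_ite_eq' (Icc 1 (n-1)) 1
      (fun _ => if bval u 2 < -bval u 1 then 1 else 0), if_pos h1]
  rw [key, key]
  apply Finset.sum_congr rfl
  intro i hi
  simp only [Finset.mem_Icc] at hi
  by_cases hi1 : i = 1
  · subst hi1
    rw [bval_flip1_one w (by omega), bval_flip1_ne w (show (1:ℕ)+1 ≠ 1 by omega)]
    simp only [neg_neg, if_pos rfl]
    have hodd : Odd 1 := odd_one
    simp only [hodd, true_and]
    split_ifs <;> omega
  · rw [bval_flip1_ne w hi1, bval_flip1_ne w (show i+1 ≠ 1 by omega)]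
    simp [hi1]

lemma negs_flip1 (hn : 1 ≤ n) (w : BG n) :
    negs (flip1 w) + (if bval w 1 < 0 then 1 else 0)
      = negs w + (if -bval w 1 < 0 then 1 else 0) := by
  have h1 : (1:ℕ) ∈ Icc 1 n := by simp only [Finset.mem_Icc]; omega
  unfold negs
  rw [Finset.card_filter, Finset.card_filter,
    show (if bval w 1 < 0 then (1:ℕ) else 0) = ∑ i ∈ Icc 1 n,
      (if i = 1 then (if bval w 1 < 0 then 1 else 0) else 0) by
        rw [Finset.sum_ite_eq' (Icc 1 n) 1 (fun _ => if bval w 1 < 0 then 1 else 0), if_pos h1],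
    show (if -bval w 1 < 0 then (1:ℕ) else 0) = ∑ i ∈ Icc 1 n,
      (if i = 1 then (if -bval w 1 < 0 then 1 else 0) else 0) by
        rw [Finset.sum_ite_eq' (Icc 1 n) 1 (fun _ => if -bval w 1 < 0 then 1 else 0), if_pos h1],
    ← Finset.sum_add_distrib, ← Finset.sum_add_distrib]
  apply Finset.sum_congr rfl
  intro i hi
  by_cases hi1 : i = 1
  · subst hi1
    rw [bval_flip1_one w hn]
    split_ifs <;> omega
  · rw [bval_flip1_ne w hi1]
    simp [hi1]

lemma even_negs_flip1 (hn : 1 ≤ n) (w : BG n) :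
    Even (negs (flip1 w)) ↔ ¬ Even (negs w) := by
  have h := negs_flip1 hn w
  have hb := bval_pos_or_neg w (le_refl 1) hn
  rw [Nat.even_iff, Nat.even_iff]
  split_ifs at h <;> omega

end Lemmas4
section Lemmas5
variable {n : ℕ}

def psiBG {n : ℕ} (w : BG n) : BG n := if Even n then negBG w else flip1 (negBG w)

lemma negBG_negBG (w : BG n) : negBG (negBG w) = w := by
  unfold negBG
  exact Prod.ext rfl (by funext i; simp)

lemma flip1_flip1 (w : BG n) : flip1 (flip1 w) = w := by
  unfold flip1
  refine Prod.ext rfl ?_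
  funext i
  by_cases h : (i : ℕ) = 0 <;> simp [h]

lemma negBG_flip1 (w : BG n) : negBG (flip1 w) = flip1 (negBG w) := by
  unfold negBG flip1
  refine Prod.ext rfl ?_
  funext i
  by_cases h : (i : ℕ) = 0 <;> simp [h]

lemma psiBG_psiBG (w : BG n) : psiBG (psiBG w) = w := by
  unfold psiBG
  by_cases h : Even n
  · simp [h, negBG_negBG]
  · simp only [h, if_neg, if_false]
    rw [← negBG_flip1, flip1_flip1, negBG_negBG]

lemma edesD_psiBG (w : BG n) :
    edesD w + edesD (psiBG w) = ((Icc 1 (n-1)).filter (fun i => Even i)).card := by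
  unfold psiBG
  by_cases h : Even n <;> simp only [h, if_true, if_false]
  · exact edesD_negBG w
  · rw [edesD_flip1]; exact edesD_negBG w

lemma odesD_psiBG (hn : 2 ≤ n) (w : BG n) :
    odesD w + odesD (psiBG w) = ((Icc 1 (n-1)).filter (fun i => Odd i)).card + 1 := by
  unfold psiBG
  by_cases h : Even n <;> simp only [h, if_true, if_false]
  · exact odesD_negBG hn w
  · rw [odesD_flip1 hn]; exact odesD_negBG hn w

lemma invD_psiBG (hn : 2 ≤ n) (w : BG n) :
    invD w + invD (psiBG w) = n * (n - 1) := by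
  unfold psiBG
  by_cases h : Even n <;> simp only [h, if_true, if_false]
  · exact invD_negBG w
  · rw [invD_flip1 (by omega)]; exact invD_negBG w

lemma bval_psiBG_n (hn : 2 ≤ n) (w : BG n) : bval (psiBG w) n = -bval w n := by
  unfold psiBG
  by_cases h : Even n <;> simp only [h, if_true, if_false]
  · exact bval_negBG w n
  · rw [bval_flip1_ne (negBG w) (show n ≠ 1 by omega)]; exact bval_negBG w n

lemma even_negs_psiBG (hn : 2 ≤ n) (w : BG n) :
    Even (negs (psiBG w)) ↔ Even (negs w) := by
  have h1 := negs_negBG w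
  unfold psiBG
  by_cases h : Even n <;> simp only [h, if_true, if_false]
  · rw [Nat.even_iff] at h
    rw [Nat.even_iff, Nat.even_iff]
    omega
  · rw [even_negs_flip1 (by omega)]
    rw [Nat.even_iff] at h ⊢
    rw [Nat.even_iff]
    omega

lemma mem_Dplus_psiBG (hn : 2 ≤ n) (w : BG n) (hw : w ∈ Dminus n) : psiBG w ∈ Dplus n := by
  unfold Dminus Dplus DG at *
  simp only [Finset.mem_filter, Finset.mem_univ, true_and] at *
  refine ⟨(even_negs_psiBG hn w).mpr hw.1, ?_⟩
  rw [bval_psiBG_n hn w]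
  omega

lemma mem_Dminus_psiBG (hn : 2 ≤ n) (w : BG n) (hw : w ∈ Dplus n) : psiBG w ∈ Dminus n := by
  unfold Dminus Dplus DG at *
  simp only [Finset.mem_filter, Finset.mem_univ, true_and] at *
  refine ⟨(even_negs_psiBG hn w).mpr hw.1, ?_⟩
  rw [bval_psiBG_n hn w]
  omega

end Lemmas5
section Lemmas6

lemma sum_Dminus_eq (n : ℕ) (hn : 2 ≤ n) :
    DminusPoly n sK tK qK =
      ∑ w ∈ Dplus n,
        sK ^ ((n-1)/2 - edesD w) * tK ^ (n/2 + 1 - odesD w) * qK ^ (n*(n-1) - invD w) := by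
  unfold DminusPoly
  apply Finset.sum_nbij' (fun w => psiBG w) (fun w => psiBG w)
  · exact fun a ha => mem_Dplus_psiBG hn a ha
  · exact fun a ha => mem_Dminus_psiBG hn a ha
  · exact fun a _ => psiBG_psiBG a
  · exact fun a _ => psiBG_psiBG a
  · intro a _
    have he := edesD_psiBG a
    have ho := odesD_psiBG hn a
    have hi := invD_psiBG hn a
    rw [card_even_Icc] at he
    rw [card_odd_Icc] at ho
    rw [show (n-1)/2 - edesD (psiBG a) = edesD a by omega,
      show n/2 + 1 - odesD (psiBG a) = odesD a by omega,
      show n*(n-1) - invD (psiBG a) = invD a by omega]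

lemma edesD_le (n : ℕ) (w : BG n) : edesD w ≤ (n-1)/2 := by
  have := edesD_psiBG w
  rw [card_even_Icc] at this
  omega

lemma odesD_le (n : ℕ) (hn : 2 ≤ n) (w : BG n) : odesD w ≤ n/2 + 1 := by
  have := odesD_psiBG hn w
  rw [card_odd_Icc] at this
  omega

lemma invD_le (n : ℕ) (hn : 2 ≤ n) (w : BG n) : invD w ≤ n*(n-1) := by
  have := invD_psiBG hn w
  omega

lemma sK_ne : sK ≠ 0 := by
  unfold sK
  rw [map_ne_zero_iff _ (IsFractionRing.injective (MvPolynomial (Fin 3) ℚ) K)]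
  exact MvPolynomial.X_ne_zero 1

lemma tK_ne : tK ≠ 0 := by
  unfold tK
  rw [map_ne_zero_iff _ (IsFractionRing.injective (MvPolynomial (Fin 3) ℚ) K)]
  exact MvPolynomial.X_ne_zero 2

lemma qK_ne : qK ≠ 0 := by
  unfold qK
  rw [map_ne_zero_iff _ (IsFractionRing.injective (MvPolynomial (Fin 3) ℚ) K)]
  exact MvPolynomial.X_ne_zero 0

lemma mult_form (n : ℕ) (hn : 2 ≤ n) :
    (∑ w ∈ Dplus n,
        sK ^ ((n-1)/2 - edesD w) * tK ^ (n/2 + 1 - odesD w) * qK ^ (n*(n-1) - invD w))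
      = qK ^ (n*(n-1)) * sK ^ ((n-1)/2) * tK ^ (n/2 + 1)
        * DplusPoly n sK⁻¹ tK⁻¹ qK⁻¹ := by
  unfold DplusPoly
  rw [Finset.mul_sum]
  apply Finset.sum_congr rfl
  intro w _
  rw [pow_sub₀ sK sK_ne (edesD_le n w), pow_sub₀ tK tK_ne (odesD_le n hn w),
    pow_sub₀ qK qK_ne (invD_le n hn w), inv_pow, inv_pow, inv_pow]
  ring

lemma Dpoly_split (n : ℕ) (hn : 2 ≤ n) :
    Dpoly n sK tK qK = DplusPoly n sK tK qK + DminusPoly n sK tK qK := by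
  unfold Dpoly DplusPoly DminusPoly Dplus Dminus
  rw [← Finset.sum_filter_add_sum_filter_not (DG n) (fun w => 0 < bval w n)
    (fun w => sK ^ edesD w * tK ^ odesD w * qK ^ invD w)]
  congr 1
  apply Finset.sum_congr _ (fun _ _ => rfl)
  apply Finset.filter_congr
  intro w _
  have := bval_pos_or_neg w (show 1 ≤ n by omega) (le_refl n)
  constructor
  · intro h; omega
  · intro h; omega

end Lemmas6

theorem typeD_plus_minus_symmetry :
    -- odd case `n = 2k+1` (`k ≥ 1`), as an identity of sums
    (∀ k : ℕ, 1 ≤ k →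
      DminusPoly (2 * k + 1) sK tK qK =
        ∑ w ∈ Dplus (2 * k + 1),
          sK ^ (k - edesD w) * tK ^ (k + 1 - odesD w)
            * qK ^ ((2 * k + 1) * (2 * k + 1 - 1) - invD w))
    ∧ -- odd case, multiplicative form
    (∀ k : ℕ, 1 ≤ k →
      DminusPoly (2 * k + 1) sK tK qK =
        qK ^ ((2 * k + 1) * (2 * k + 1 - 1)) * sK ^ k * tK ^ (k + 1)
          * DplusPoly (2 * k + 1) sK⁻¹ tK⁻¹ qK⁻¹)
    ∧ -- even case `n = 2k` (`k ≥ 1`), as an identity of sums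
    (∀ k : ℕ, 1 ≤ k →
      DminusPoly (2 * k) sK tK qK =
        ∑ w ∈ Dplus (2 * k),
          sK ^ (k - 1 - edesD w) * tK ^ (k + 1 - odesD w)
            * qK ^ ((2 * k) * (2 * k - 1) - invD w))
    ∧ -- even case, multiplicative form
    (∀ k : ℕ, 1 ≤ k →
      DminusPoly (2 * k) sK tK qK =
        qK ^ ((2 * k) * (2 * k - 1)) * sK ^ (k - 1) * tK ^ (k + 1)
          * DplusPoly (2 * k) sK⁻¹ tK⁻¹ qK⁻¹)
    ∧ -- consequence, odd case
    (∀ k : ℕ, 1 ≤ k →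
      Dpoly (2 * k + 1) sK tK qK =
        DplusPoly (2 * k + 1) sK tK qK
          + qK ^ ((2 * k + 1) * (2 * k + 1 - 1)) * sK ^ k * tK ^ (k + 1)
            * DplusPoly (2 * k + 1) sK⁻¹ tK⁻¹ qK⁻¹)
    ∧ -- consequence, even case
    (∀ k : ℕ, 1 ≤ k →
      Dpoly (2 * k) sK tK qK =
        DplusPoly (2 * k) sK tK qK
          + qK ^ ((2 * k) * (2 * k - 1)) * sK ^ (k - 1) * tK ^ (k + 1)
            * DplusPoly (2 * k) sK⁻¹ tK⁻¹ qK⁻¹) := by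
  have odd1 : ∀ k : ℕ, 1 ≤ k →
      DminusPoly (2 * k + 1) sK tK qK =
        ∑ w ∈ Dplus (2 * k + 1),
          sK ^ (k - edesD w) * tK ^ (k + 1 - odesD w)
            * qK ^ ((2 * k + 1) * (2 * k + 1 - 1) - invD w) := by
    intro k hk
    have h := sum_Dminus_eq (2 * k + 1) (by omega)
    have e1 : (2 * k + 1 - 1) / 2 = k := by omega
    have e2 : (2 * k + 1) / 2 = k := by omega
    rw [h, e1, e2]
  have odd2 : ∀ k : ℕ, 1 ≤ k →
      DminusPoly (2 * k + 1) sK tK qK =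
        qK ^ ((2 * k + 1) * (2 * k + 1 - 1)) * sK ^ k * tK ^ (k + 1)
          * DplusPoly (2 * k + 1) sK⁻¹ tK⁻¹ qK⁻¹ := by
    intro k hk
    have h2 := mult_form (2 * k + 1) (by omega)
    have e1 : (2 * k + 1 - 1) / 2 = k := by omega
    have e2 : (2 * k + 1) / 2 = k := by omega
    rw [e1, e2] at h2
    rw [odd1 k hk, h2]
  have even1 : ∀ k : ℕ, 1 ≤ k →
      DminusPoly (2 * k) sK tK qK =
        ∑ w ∈ Dplus (2 * k),
          sK ^ (k - 1 - edesD w) * tK ^ (k + 1 - odesD w)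
            * qK ^ ((2 * k) * (2 * k - 1) - invD w) := by
    intro k hk
    have h := sum_Dminus_eq (2 * k) (by omega)
    have e1 : (2 * k - 1) / 2 = k - 1 := by omega
    have e2 : (2 * k) / 2 = k := by omega
    rw [h, e1, e2]
  have even2 : ∀ k : ℕ, 1 ≤ k →
      DminusPoly (2 * k) sK tK qK =
        qK ^ ((2 * k) * (2 * k - 1)) * sK ^ (k - 1) * tK ^ (k + 1)
          * DplusPoly (2 * k) sK⁻¹ tK⁻¹ qK⁻¹ := by
    intro k hk
    have h2 := mult_form (2 * k) (by omega)
    have e1 : (2 * k - 1) / 2 = k - 1 := by omega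
    have e2 : (2 * k) / 2 = k := by omega
    rw [e1, e2] at h2
    rw [even1 k hk, h2]
  refine ⟨odd1, odd2, even1, even2, ?_, ?_⟩
  · intro k hk
    rw [Dpoly_split (2 * k + 1) (by omega), odd2 k hk]
  · intro k hk
    rw [Dpoly_split (2 * k) (by omega), even2 k hk]

end
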